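/- arXiv:2504.12269 — 3 statements merged into one kernel-verified Lean document; each statement's English description precedes it below -/
import Mathlib

section
/- Let f : ℝⁿ → ℝⁿ be locally Lipschitz with f(0) = 0, and let S ⊆ ℝⁿ be a compact set with 0 ∈ S that is forward invariant for the ODE ẋ = f(x). Suppose V : ℝⁿ → ℝ is continuously differentiable and satisfies ⟨∇V(x), f(x)⟩ < 0 for all x ∈ S \ {0} and ⟨∇V(0), f(0)⟩ = 0. Then every solution x(·) of ẋ = f(x) with x(0) ∈ S satisfies x(t) → 0 as t → ∞; in particular, S is contained in the region of attraction of the equilibrium 0. -/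
/-! Along a solution in `S`, `V ∘ x` is nonincreasing and, `S` being compact, bounded below.
If `x` had a cluster point `p ≠ 0` in `S`, then `V` would decrease along `f` at a rate at least
`c > 0` on a ball around `p`. Since `‖ẋ‖ = ‖f (x)‖` is bounded on `S`, every visit to the half ball
keeps `x` in that ball for a fixed time `τ`, over which `V ∘ x` drops by `c τ`; a visit after
`V ∘ x` has come within `c τ` of its infimum is therefore impossible. -/

open Filter Set

/-- A curve `x` is a solution of `ẋ = f(x)` on the time interval `[0, T)` (with `T ∈ (0, ∞]`
encoded as an extended real number). -/
def IsSolOn {E : Type*} [NormedAddCommGroup E] [NormedSpace ℝ E]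
    (f : E → E) (x : ℝ → E) (T : EReal) : Prop :=
  ∀ t : ℝ, 0 ≤ t → (t : EReal) < T → HasDerivWithinAt x (f (x t)) (Set.Ici 0) t

def FwdInv {E : Type*} [NormedAddCommGroup E] [NormedSpace ℝ E]
    (f : E → E) (S : Set E) : Prop :=
  ∀ (T : EReal) (x : ℝ → E), 0 < T → IsSolOn f x T → x 0 ∈ S →
    ∀ t : ℝ, 0 ≤ t → (t : EReal) < T → x t ∈ S

open Topology

theorem exists_forall_sub_lt_of_bddBelow {α : Type*} {φ : α → ℝ} {s : Set α} (hs : s.Nonempty)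
    (hφ : BddBelow (φ '' s)) {ε : ℝ} (hε : 0 < ε) : ∃ a ∈ s, ∀ b ∈ s, φ a - ε < φ b := by
  obtain ⟨_, ⟨a, ha, rfl⟩, hlt⟩ :=
    exists_lt_of_csInf_lt (hs.image φ) (lt_add_of_pos_right (sInf (φ '' s)) hε)
  exact ⟨a, ha, fun b hb => by linarith [csInf_le hφ (mem_image_of_mem φ hb)]⟩

section Solutions

variable {E : Type*} [NormedAddCommGroup E] [NormedSpace ℝ E] {f : E → E} {x : ℝ → E}

theorem IsSolOn.hasDerivAt (hx : IsSolOn f x ⊤) {t : ℝ} (ht : 0 < t) :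
    HasDerivAt x (f (x t)) t :=
  (hx t ht.le (EReal.coe_lt_top t)).hasDerivAt (Ici_mem_nhds ht)

theorem IsSolOn.continuousOn (hx : IsSolOn f x ⊤) : ContinuousOn x (Ici 0) :=
  fun t ht => (hx t ht (EReal.coe_lt_top t)).continuousWithinAt

theorem IsSolOn.dist_le {M : ℝ} (hx : IsSolOn f x ⊤) (hM : ∀ t, 0 ≤ t → ‖f (x t)‖ ≤ M)
    {s t : ℝ} (hs : 0 ≤ s) (ht : 0 ≤ t) : dist (x t) (x s) ≤ M * |t - s| := by
  rw [dist_eq_norm, ← Real.norm_eq_abs]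
  exact (convex_Ici 0).norm_image_sub_le_of_norm_hasDerivWithin_le
    (fun u hu => hx u hu (EReal.coe_lt_top u)) hM hs ht

theorem IsSolOn.hasDerivAt_comp {V : E → ℝ} (hx : IsSolOn f x ⊤) (hV : Differentiable ℝ V)
    {t : ℝ} (ht : 0 < t) : HasDerivAt (V ∘ x) (fderiv ℝ V (x t) (f (x t))) t :=
  (hV (x t)).hasFDerivAt.comp_hasDerivAt t (hx.hasDerivAt ht)

theorem IsSolOn.comp_sub_le_mul_sub {V : E → ℝ} {C t₀ t₁ : ℝ} (hx : IsSolOn f x ⊤)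
    (hV : Differentiable ℝ V) (hC : ∀ s ∈ Ioo t₀ t₁, fderiv ℝ V (x s) (f (x s)) ≤ C)
    (h₀ : 0 ≤ t₀) (h₀₁ : t₀ ≤ t₁) : V (x t₁) - V (x t₀) ≤ C * (t₁ - t₀) := by
  have hpos : ∀ s ∈ interior (Icc t₀ t₁), 0 < s := by
    rw [interior_Icc]
    exact fun s hs => h₀.trans_lt hs.1
  refine (convex_Icc t₀ t₁).image_sub_le_mul_sub_of_deriv_le
    (hV.continuous.comp_continuousOn (hx.continuousOn.mono fun s hs => h₀.trans hs.1))
    (fun s hs => (hx.hasDerivAt_comp hV (hpos s hs)).differentiableAt.differentiableWithinAt)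
    (fun s hs => ?_) t₀ ⟨le_rfl, h₀₁⟩ t₁ ⟨h₀₁, le_rfl⟩ h₀₁
  rw [(hx.hasDerivAt_comp hV (hpos s hs)).deriv]
  exact hC s (interior_Icc (a := t₀) ▸ hs)

theorem IsSolOn.antitoneOn_comp {V : E → ℝ} (hx : IsSolOn f x ⊤) (hV : Differentiable ℝ V)
    (hle : ∀ t, 0 < t → fderiv ℝ V (x t) (f (x t)) ≤ 0) : AntitoneOn (V ∘ x) (Ici 0) :=
  fun s hs t _ hst => sub_nonpos.1 <| by
    simpa using hx.comp_sub_le_mul_sub hV (fun u hu => hle u (hs.trans_lt hu.1)) hs hst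

theorem IsSolOn.exists_comp_add_le_sub {V : E → ℝ} {M : ℝ} {p : E} (hx : IsSolOn f x ⊤)
    (hV : Differentiable ℝ V) (hM₀ : 0 < M) (hM : ∀ t, 0 ≤ t → ‖f (x t)‖ ≤ M)
    (hcont : ContinuousAt (fun y => fderiv ℝ V y (f y)) p) (hp : fderiv ℝ V p (f p) < 0) :
    ∃ τ > 0, ∃ η > 0, ∃ U ∈ 𝓝 p, ∀ t, 0 ≤ t → x t ∈ U → V (x (t + τ)) ≤ V (x t) - η := by
  set c := fderiv ℝ V p (f p) / 2 with hc
  obtain ⟨r, hr, hball⟩ := Metric.mem_nhds_iff.1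
    (hcont.preimage_mem_nhds (Iio_mem_nhds (show fderiv ℝ V p (f p) < c by linarith)))
  set τ := r / (2 * M)
  refine ⟨τ, by positivity, -c * τ, mul_pos (by linarith) (by positivity), Metric.ball p (r / 2),
    Metric.ball_mem_nhds p (by positivity), fun t ht hxt => ?_⟩
  have hstay : ∀ s ∈ Ioo t (t + τ), x s ∈ Metric.ball p r := fun s hs => by
    have hmove : M * |s - t| ≤ r / 2 := by
      rw [abs_of_pos (sub_pos.2 hs.1), ← le_div_iff₀' hM₀, div_div]
      linarith [hs.2]
    calc dist (x s) p ≤ dist (x s) (x t) + dist (x t) p := dist_triangle _ _ _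
      _ < r / 2 + r / 2 :=
        add_lt_add_of_le_of_lt ((hx.dist_le hM ht (ht.trans hs.1.le)).trans hmove) hxt
      _ = r := add_halves r
  have hdrop := hx.comp_sub_le_mul_sub hV (fun s hs => (hball (hstay s hs)).le) ht
    (le_add_of_nonneg_right (by positivity : 0 ≤ τ))
  rw [add_sub_cancel_left] at hdrop
  linarith

theorem IsSolOn.tendsto_of_fderiv_neg {V : E → ℝ} {S : Set E} {a : E} (hx : IsSolOn f x ⊤)
    (hf : Continuous f) (hV : ContDiff ℝ 1 V) (hS : IsCompact S) (hxS : ∀ t, 0 ≤ t → x t ∈ S)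
    (hle : ∀ y ∈ S, fderiv ℝ V y (f y) ≤ 0) (hlt : ∀ y ∈ S, y ≠ a → fderiv ℝ V y (f y) < 0) :
    Tendsto x atTop (𝓝 a) := by
  have hVd : Differentiable ℝ V := hV.differentiable one_ne_zero
  have hanti : AntitoneOn (V ∘ x) (Ici 0) :=
    hx.antitoneOn_comp hVd fun t ht => hle (x t) (hxS t ht.le)
  have hbdd : BddBelow ((V ∘ x) '' Ici 0) :=
    (hS.bddBelow_image hV.continuous.continuousOn).mono <| by
      rintro _ ⟨t, ht, rfl⟩
      exact mem_image_of_mem V (hxS t ht)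
  obtain ⟨M, hM₀, hM⟩ := (hS.image_of_continuousOn hf.continuousOn).isBounded.exists_pos_norm_le
  have hMx : ∀ t, 0 ≤ t → ‖f (x t)‖ ≤ M := fun t ht => hM _ (mem_image_of_mem f (hxS t ht))
  refine hS.tendsto_nhds_of_unique_mapClusterPt (eventually_atTop.2 ⟨0, hxS⟩) fun p hpS hp => ?_
  by_contra hpa
  obtain ⟨τ, hτ, η, hη, U, hU, hdrop⟩ := hx.exists_comp_add_le_sub hVd hM₀ hMx
    ((hV.continuous_fderiv one_ne_zero).clm_apply hf).continuousAt (hlt p hpS hpa)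
  obtain ⟨t₁, ht₁, hnear⟩ := exists_forall_sub_lt_of_bddBelow nonempty_Ici hbdd hη
  obtain ⟨t₀, ht₁₀, hxU⟩ := (hp.frequently hU).forall_exists_of_atTop t₁
  have ht₀ : 0 ≤ t₀ := le_trans ht₁ ht₁₀
  have hdec : V (x t₀) ≤ V (x t₁) := hanti ht₁ ht₀ ht₁₀
  have hinf : V (x t₁) - η < V (x (t₀ + τ)) := hnear (t₀ + τ) (mem_Ici.2 (by positivity))
  linarith [hdrop t₀ ht₀ hxU]

end Solutions

theorem stmt0_general {n : ℕ} (f : EuclideanSpace ℝ (Fin n) → EuclideanSpace ℝ (Fin n))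
    (hf : LocallyLipschitz f) (hf0 : f 0 = 0)
    (S : Set (EuclideanSpace ℝ (Fin n))) (hScomp : IsCompact S)
    (hSinv : FwdInv f S)
    (V : EuclideanSpace ℝ (Fin n) → ℝ) (hV : ContDiff ℝ 1 V)
    (hVdec : ∀ x ∈ S, x ≠ 0 → inner (𝕜 := ℝ) (gradient V x) (f x) < (0 : ℝ)) :
    ∀ x : ℝ → EuclideanSpace ℝ (Fin n), IsSolOn f x (⊤ : EReal) → x 0 ∈ S →
      Tendsto x atTop (nhds 0) := by
  intro x hx hx0
  have hlt : ∀ y ∈ S, y ≠ 0 → fderiv ℝ V y (f y) < 0 := fun y hy hy0 =>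
    inner_gradient_left (f := V) ▸ hVdec y hy hy0
  refine hx.tendsto_of_fderiv_neg hf.continuous hV hScomp
    (fun t ht => hSinv ⊤ x (by simp) hx hx0 t ht (EReal.coe_lt_top t)) (fun y hy => ?_) hlt
  rcases eq_or_ne y 0 with rfl | hy0
  · simp [hf0]
  · exact (hlt y hy hy0).le

/-- Corollary 1: if `S` is a compact forward invariant set containing the equilibrium `0`,
and `V` is a `C¹` function with `⟨∇V(x), f(x)⟩ < 0` on `S \ {0}` and `⟨∇V(0), f(0)⟩ = 0`,
then every solution starting in `S` converges to `0`, i.e. `S` is contained in the region of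
attraction of `0`. -/
theorem stmt0 {n : ℕ} (f : EuclideanSpace ℝ (Fin n) → EuclideanSpace ℝ (Fin n))
    (hf : LocallyLipschitz f) (hf0 : f 0 = 0)
    (S : Set (EuclideanSpace ℝ (Fin n))) (hScomp : IsCompact S)
    (h0S : (0 : EuclideanSpace ℝ (Fin n)) ∈ S)
    (hSinv : FwdInv f S)
    (V : EuclideanSpace ℝ (Fin n) → ℝ) (hV : ContDiff ℝ 1 V)
    (hVdec : ∀ x ∈ S, x ≠ 0 → inner (𝕜 := ℝ) (gradient V x) (f x) < (0 : ℝ))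
    (hV0 : inner (𝕜 := ℝ) (gradient V 0) (f 0) = (0 : ℝ)) :
    ∀ x : ℝ → EuclideanSpace ℝ (Fin n), IsSolOn f x (⊤ : EReal) → x 0 ∈ S →
      Tendsto x atTop (nhds 0) :=
  stmt0_general f hf hf0 S hScomp hSinv V hV hVdec
end

section
/- Let A ∈ ℝⁿˣⁿ, a ∈ ℝⁿ, s ∈ ℝⁿ, ε > 0, and let E² , …, E^{n+1} ∈ ℝⁿ be row vectors with positive constants u², …, u^{n+1} > 0. Set ρ = max_{k=2,…,n+1} u^k/(u^k + ε). Then for every x ∈ ℝⁿ satisfying s·(A x + a) ≥ ε and E^k·(A x + a) ≥ −u^k for all k = 2, …, n+1, it holds for every k = 2, …, n+1 that ((1 − ρ)E^k + ρ s)·(A x + a) ≥ 0; moreover ρ < 1. -/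
open Matrix

/-- Nagumo's sub-tangentiality condition on the facets of the shrunk simplex in the proof of
Theorem 2 (NUGIS): with `ρ = max_k u^k/(u^k + ε)`, for every `x` with `s·(Ax+a) ≥ ε` and
`E^k·(Ax+a) ≥ -u^k` for all `k`, each interpolated normal `(1-ρ)E^k + ρ s` satisfies
`((1-ρ)E^k + ρ s)·(Ax+a) ≥ 0`; moreover `ρ < 1`. The `n` rows `E², …, E^{n+1}` are indexed
here by `k : Fin n`. -/
theorem stmt5 {n : ℕ} (hn : 0 < n)
    (A : Matrix (Fin n) (Fin n) ℝ) (a s : Fin n → ℝ) (ε : ℝ) (hε : 0 < ε)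
    (E : Fin n → Fin n → ℝ) (u : Fin n → ℝ) (hu : ∀ k, 0 < u k)
    (ρ : ℝ)
    (hρ : ρ = Finset.univ.sup'
      (Finset.univ_nonempty_iff.mpr (Fin.pos_iff_nonempty.mp hn))
      (fun k => u k / (u k + ε))) :
    (∀ x : Fin n → ℝ, ε ≤ s ⬝ᵥ (A *ᵥ x + a) →
      (∀ k, -u k ≤ E k ⬝ᵥ (A *ᵥ x + a)) →
      ∀ k, 0 ≤ ((1 - ρ) • E k + ρ • s) ⬝ᵥ (A *ᵥ x + a)) ∧
    ρ < 1 := by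
  have hρ1 : ρ < 1 := by
    rw [hρ]
    apply (Finset.sup'_lt_iff _).mpr
    intro k _
    rw [div_lt_one (by linarith [hu k])]
    linarith [hu k]
  have hρk : ∀ k, u k / (u k + ε) ≤ ρ := by
    intro k
    rw [hρ]
    exact Finset.le_sup' (fun k => u k / (u k + ε)) (Finset.mem_univ k)
  have hρ0 : 0 ≤ ρ := by
    have k : Fin n := ⟨0, hn⟩
    refine le_trans ?_ (hρk k)
    exact div_nonneg (hu k).le (by linarith [hu k])
  refine ⟨fun x hs hE k => ?_, hρ1⟩
  rw [add_dotProduct, smul_dotProduct, smul_dotProduct]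
  have h1 : ρ * ε ≥ (1 - ρ) * u k := by
    have := hρk k
    have hpos : 0 < u k + ε := by linarith [hu k]
    rw [div_le_iff₀ hpos] at this
    nlinarith
  have h2 : (1 - ρ) * (E k ⬝ᵥ (A *ᵥ x + a)) ≥ (1 - ρ) * (-u k) :=
    mul_le_mul_of_nonneg_left (hE k) (by linarith)
  have h3 : ρ * (s ⬝ᵥ (A *ᵥ x + a)) ≥ ρ * ε := mul_le_mul_of_nonneg_left hs hρ0
  simp only [smul_eq_mul]
  nlinarith
end

section
/- Let S ⊂ ℝⁿ be compact with 0 ∈ S, partitioned into finitely many compact convex polytopes {X_i}_{i∈I} with pairwise disjoint interiors. Let f : S → ℝⁿ be continuous and piecewise affine with f(x) = A_i x + a_i on X_i and f(0) = 0, locally Lipschitz, and suppose S is forward invariant for ẋ = f(x). Let V : S → ℝ be continuous and piecewise affine, V(x) = p_i·x + q_i on X_i with q_i = 0 for every cell containing the origin, and suppose there exists ε₁ > 0 such that p_i·(A_i v + a_i) ≤ −ε₁ for every i ∈ I and every vertex v ≠ 0 of X_i. Then every solution x(·) of ẋ = f(x) with x(0) ∈ S satisfies x(t) → 0 as t → ∞;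 that is, S is contained in the region of attraction of the equilibrium 0. -/
/-!
On a cell `X i`, the function `y ↦ p i ⬝ᵥ f y + (ε₁ / R) * ‖y‖` is convex, where `R` bounds `‖·‖`
on `S`, so its maximum is attained at a vertex, where it is `≤ 0` (at the vertex `0` because
`f 0 = 0`). A short time after any instant a solution only meets cells containing its current
position, so the right Dini derivative of `V ∘ x` is at most `-(ε₁ / R) * ‖x t‖`. As `V` is bounded
below and `‖ẋ‖ ≤ M` on the compact invariant set `S`, each visit outside the `ε`-ball costs `V` a
fixed amount, so there are only finitely many such visits.
-/

open Filter Set Matrix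

open Topology

section Polytope

variable {E : Type*} [AddCommGroup E] [Module ℝ E] [TopologicalSpace E] [T2Space E]
  [IsTopologicalAddGroup E] [ContinuousSMul ℝ E] [LocallyConvexSpace ℝ E]

theorem Set.Finite.convexHull_extremePoints_convexHull {W : Set E} (hW : W.Finite) :
    convexHull ℝ ((convexHull ℝ W).extremePoints ℝ) = convexHull ℝ W := by
  have hfin : ((convexHull ℝ W).extremePoints ℝ).Finite :=
    hW.subset extremePoints_convexHull_subset
  rw [← (hfin.isCompact_convexHull ℝ).isClosed.closure_eq]
  exact closure_convexHull_extremePoints (hW.isCompact_convexHull ℝ) (convex_convexHull ℝ W)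

theorem ConvexOn.exists_mem_extremePoints_ge {X : Set E} {W : Finset E}
    (hX : X = convexHull ℝ ↑W) {g : E → ℝ} (hg : ConvexOn ℝ X g) {y : E} (hy : y ∈ X) :
    ∃ v ∈ X.extremePoints ℝ, g y ≤ g v := by
  subst hX
  rw [← W.finite_toSet.convexHull_extremePoints_convexHull] at hy
  exact hg.exists_ge_of_mem_convexHull extremePoints_subset hy

end Polytope

theorem convexOn_dotProduct_mulVec_add {n : ℕ} (A : Matrix (Fin n) (Fin n) ℝ) (a p : Fin n → ℝ) :
    ConvexOn ℝ univ fun y => p ⬝ᵥ (A *ᵥ y + a) := by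
  refine ⟨convex_univ, fun y _ z _ s u _ _ hsu => ?_⟩
  simp only [mulVec_add, mulVec_smul, dotProduct_add, dotProduct_smul, smul_eq_mul]
  exact le_of_eq (by linear_combination -(p ⬝ᵥ a) * hsu)

theorem dotProduct_mulVec_add_le_neg_mul_norm {n : ℕ} {X : Set (Fin n → ℝ)}
    {W : Finset (Fin n → ℝ)} (hX : X = convexHull ℝ ↑W) {A : Matrix (Fin n) (Fin n) ℝ}
    {a p : Fin n → ℝ} {ε R : ℝ} (hε : 0 ≤ ε) (hR : 0 < R) (hXR : ∀ v ∈ X, ‖v‖ ≤ R)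
    (ha : (0 : Fin n → ℝ) ∈ X → a = 0)
    (hdec : ∀ v ∈ X.extremePoints ℝ, v ≠ 0 → p ⬝ᵥ (A *ᵥ v + a) ≤ -ε)
    {y : Fin n → ℝ} (hy : y ∈ X) : p ⬝ᵥ (A *ᵥ y + a) ≤ -(ε / R * ‖y‖) := by
  have hconv : ConvexOn ℝ X fun y => p ⬝ᵥ (A *ᵥ y + a) + ε / R * ‖y‖ :=
    ((convexOn_dotProduct_mulVec_add A a p).add
      (convexOn_univ_norm.smul (div_nonneg hε hR.le))).subset (subset_univ X)
      (hX ▸ convex_convexHull ℝ _)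
  obtain ⟨v, hv, hyv⟩ := hconv.exists_mem_extremePoints_ge hX hy
  suffices p ⬝ᵥ (A *ᵥ v + a) + ε / R * ‖v‖ ≤ 0 by linarith
  rcases eq_or_ne v 0 with rfl | hv0
  · simp [ha (extremePoints_subset hv)]
  · have hεv : ε / R * ‖v‖ ≤ ε := by
      rw [div_mul_eq_mul_div, div_le_iff₀ hR]
      exact mul_le_mul_of_nonneg_left (hXR v (extremePoints_subset hv)) hε
    linarith [hdec v hv hv0]

theorem HasDerivWithinAt.const_dotProduct {m : Type*} [Fintype m] {x : ℝ → m → ℝ}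
    {x' : m → ℝ} {s : Set ℝ} {t : ℝ} (hx : HasDerivWithinAt x x' s t) (p : m → ℝ) :
    HasDerivWithinAt (fun τ => p ⬝ᵥ x τ) (p ⬝ᵥ x') s t := by
  simpa only [dotProduct] using HasDerivWithinAt.fun_sum fun i _ =>
    ((hasDerivWithinAt_pi.1 hx) i).const_mul (p i)

theorem eventually_slope_comp_lt_of_eqOn {E ι : Type*} [TopologicalSpace E] [Finite ι]
    {X : ι → Set E} (hX : ∀ i, IsClosed (X i)) {V : E → ℝ} {ℓ : ι → E → ℝ}
    (hV : ∀ i, EqOn V (ℓ i) (X i)) {x : ℝ → E} {t r : ℝ} (hx : ContinuousWithinAt x (Ioi t) t)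
    (hcover : ∀ᶠ z in 𝓝[>] t, ∃ i, x z ∈ X i)
    (hℓ : ∀ i, x t ∈ X i → ∀ᶠ z in 𝓝[>] t, slope (ℓ i ∘ x) t z < r) :
    ∀ᶠ z in 𝓝[>] t, slope (V ∘ x) t z < r := by
  have hcell : ∀ᶠ z in 𝓝[>] t, ∀ i, x z ∈ X i → x t ∈ X i ∧ slope (ℓ i ∘ x) t z < r := by
    rw [eventually_all]
    intro i
    by_cases hi : x t ∈ X i
    · exact (hℓ i hi).mono fun z hz _ => ⟨hi, hz⟩
    · exact (hx.eventually_mem ((hX i).isOpen_compl.mem_nhds hi)).mono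
        fun z hz hzi => absurd hzi hz
  filter_upwards [hcover, hcell] with z ⟨i, hzi⟩ hz
  obtain ⟨hti, hlt⟩ := hz i hzi
  have hslope : slope (V ∘ x) t z = slope (ℓ i ∘ x) t z := by
    simp only [slope_def_field, Function.comp_apply, hV i hzi, hV i hti]
  rwa [hslope]

theorem frequently_slope_comp_lt_of_eqOn_dotProduct_add {m ι : Type*} [Fintype m] [Finite ι]
    {X : ι → Set (m → ℝ)} (hX : ∀ i, IsClosed (X i)) {V : (m → ℝ) → ℝ} {p : ι → m → ℝ}
    {q : ι → ℝ} (hV : ∀ i, EqOn V (fun y => p i ⬝ᵥ y + q i) (X i)) {x : ℝ → m → ℝ}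
    {x' : m → ℝ} {t r : ℝ} (hx : HasDerivWithinAt x x' (Ioi t) t)
    (hcover : ∀ᶠ z in 𝓝[>] t, ∃ i, x z ∈ X i) (hr : ∀ i, x t ∈ X i → p i ⬝ᵥ x' < r) :
    ∃ᶠ z in 𝓝[>] t, slope (V ∘ x) t z < r :=
  (eventually_slope_comp_lt_of_eqOn hX hV hx.continuousWithinAt hcover fun i hi =>
    ((hx.const_dotProduct (p i)).add_const (q i)).limsup_slope_le' (lt_irrefl t)
      (hr i hi)).frequently

theorem le_sub_mul_of_frequently_slope_lt {W : ℝ → ℝ} {a b c : ℝ} (hab : a ≤ b)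
    (hW : ContinuousOn W (Icc a b))
    (hslope : ∀ t ∈ Ico a b, ∀ r, -c < r → ∃ᶠ z in 𝓝[>] t, slope W t z < r) :
    W b ≤ W a - c * (b - a) :=
  image_le_of_liminf_slope_right_le_deriv_boundary hW (B := fun s => W a - c * (s - a))
    (by simp) (by fun_prop)
    (fun s _ => by simpa using ((hasDerivAt_id s).sub_const a).const_mul c |>.const_sub (W a)
      |>.hasDerivWithinAt)
    hslope (right_mem_Icc.2 hab)

theorem tendsto_zero_of_frequently_slope_lt_neg_mul_norm {E : Type*} [NormedAddCommGroup E]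
    {x : ℝ → E} {W : ℝ → ℝ} {κ M m : ℝ} (hκ : 0 < κ) (hM : 0 < M)
    (hx : ∀ a b, 0 ≤ a → a ≤ b → ‖x b - x a‖ ≤ M * (b - a))
    (hWc : ContinuousOn W (Ici 0)) (hWm : ∀ t, 0 ≤ t → m ≤ W t)
    (hslope : ∀ t, 0 ≤ t → ∀ r, -(κ * ‖x t‖) < r → ∃ᶠ z in 𝓝[>] t, slope W t z < r) :
    Tendsto x atTop (𝓝 0) := by
  have hdecay : ∀ a b c, 0 ≤ a → a ≤ b → (∀ t ∈ Icc a b, c ≤ κ * ‖x t‖) →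
      W b ≤ W a - c * (b - a) := fun a b c ha hab hc =>
    le_sub_mul_of_frequently_slope_lt hab (hWc.mono fun t ht => ha.trans ht.1)
      fun t ht r hr => hslope t (ha.trans ht.1) r (by linarith [hc t (Ico_subset_Icc_self ht)])
  rw [Metric.tendsto_atTop]
  by_contra! hfar
  obtain ⟨ε, hε, hfar⟩ := hfar
  set h := ε / (2 * M) with h_def
  set d := κ * (ε / 2) * h with d_def
  have hd : 0 < d := by positivity
  -- Each return of `x` outside the `ε`-ball keeps it outside the `ε / 2`-ball for time `h`.
  have hstep : ∀ u, 0 ≤ u → ∃ u', 0 ≤ u' ∧ W u' ≤ W u - d := by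
    intro u hu
    obtain ⟨v, hvu, hv⟩ := hfar u
    rw [dist_zero_right] at hv
    have hv0 : 0 ≤ v := hu.trans hvu
    have hWv : W v ≤ W u := by
      simpa using hdecay u v 0 hu hvu fun t _ => by positivity
    have hstay : ∀ t ∈ Icc v (v + h), κ * (ε / 2) ≤ κ * ‖x t‖ := by
      intro t ht
      have hMh : M * (t - v) ≤ ε / 2 := by
        calc M * (t - v) ≤ M * h := by gcongr; linarith [ht.2]
          _ = ε / 2 := by rw [h_def]; field_simp
      have hvt := norm_sub_norm_le (x v) (x t)
      rw [norm_sub_rev] at hvt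
      gcongr
      linarith [hx v t hv0 ht.1]
    refine ⟨v + h, by positivity, ?_⟩
    have := hdecay v (v + h) _ hv0 (by linarith [show 0 < h by positivity]) hstay
    rw [add_sub_cancel_left] at this
    linarith
  have hiter : ∀ k : ℕ, ∃ u, 0 ≤ u ∧ W u ≤ W 0 - k * d := by
    intro k
    induction k with
    | zero => exact ⟨0, le_rfl, by simp⟩
    | succ k ih =>
      obtain ⟨u, hu, hWu⟩ := ih
      obtain ⟨u', hu', hWu'⟩ := hstep u hu
      exact ⟨u', hu', by push_cast; linarith⟩
  obtain ⟨k, hk⟩ := exists_nat_gt ((W 0 - m) / d)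
  obtain ⟨u, hu, hWu⟩ := hiter k
  rw [div_lt_iff₀ hd] at hk
  linarith [hWm u hu]

theorem stmt11_general {n : ℕ} {ι : Type*} [Fintype ι]
    (S : Set (Fin n → ℝ)) (hScomp : IsCompact S)
    (X : ι → Set (Fin n → ℝ))
    (hXpoly : ∀ i, ∃ W : Finset (Fin n → ℝ), X i = convexHull ℝ (W : Set (Fin n → ℝ)))
    (hcover : (⋃ i, X i) = S)
    (f : (Fin n → ℝ) → (Fin n → ℝ)) (hf : ContinuousOn f S)
    (A : ι → Matrix (Fin n) (Fin n) ℝ) (a : ι → Fin n → ℝ)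
    (hfX : ∀ i, ∀ x ∈ X i, f x = A i *ᵥ x + a i)
    (hf0 : f 0 = 0)
    (hSinv : FwdInv f S)
    (V : (Fin n → ℝ) → ℝ) (hV : ContinuousOn V S)
    (p : ι → Fin n → ℝ) (q : ι → ℝ)
    (hVX : ∀ i, ∀ x ∈ X i, V x = p i ⬝ᵥ x + q i)
    (ε₁ : ℝ) (hε₁ : 0 < ε₁)
    (hdec : ∀ i, ∀ v ∈ (X i).extremePoints ℝ, v ≠ 0 →
      p i ⬝ᵥ (A i *ᵥ v + a i) ≤ -ε₁) :
    ∀ x : ℝ → (Fin n → ℝ), IsSolOn f x (⊤ : EReal) → x 0 ∈ S →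
      Tendsto x atTop (nhds 0) := by
  intro x hsol hx0
  have hderiv : ∀ t, 0 ≤ t → HasDerivWithinAt x (f (x t)) (Ici 0) t := fun t ht =>
    hsol t ht (EReal.coe_lt_top t)
  have hxS : ∀ t, 0 ≤ t → x t ∈ S := fun t ht =>
    hSinv ⊤ x (by simp) hsol hx0 t ht (EReal.coe_lt_top t)
  have hXS : ∀ i, X i ⊆ S := fun i => hcover ▸ subset_iUnion X i
  obtain ⟨R, hR, hSR⟩ := hScomp.isBounded.exists_pos_norm_le
  obtain ⟨M, hM, hfM⟩ := (hScomp.image_of_continuousOn hf).isBounded.exists_pos_norm_le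
  obtain ⟨m, hm⟩ := hScomp.bddBelow_image hV
  have hcell : ∀ i, ∀ y ∈ X i, p i ⬝ᵥ f y ≤ -(ε₁ / R * ‖y‖) := fun i y hy => by
    obtain ⟨W, hW⟩ := hXpoly i
    rw [hfX i y hy]
    exact dotProduct_mulVec_add_le_neg_mul_norm hW hε₁.le hR (fun v hv => hSR v (hXS i hv))
      (fun h0 => by simpa [hf0] using (hfX i 0 h0).symm) (hdec i) hy
  refine tendsto_zero_of_frequently_slope_lt_neg_mul_norm (W := V ∘ x) (div_pos hε₁ hR) hM
    (fun a b ha hab => ?_) (hV.comp (fun t ht => (hderiv t ht).continuousWithinAt) hxS)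
    (fun t ht => hm ⟨x t, hxS t ht, rfl⟩) (fun t ht r hr => ?_)
  · simpa using norm_image_sub_le_of_norm_deriv_le_segment'
      (fun t ht => (hderiv t (ha.trans ht.1)).mono fun s hs => ha.trans hs.1)
      (fun t ht => hfM _ ⟨x t, hxS t (ha.trans ht.1), rfl⟩) b (right_mem_Icc.2 hab)
  · have hXclosed : ∀ i, IsClosed (X i) := fun i => by
      obtain ⟨W, hW⟩ := hXpoly i
      exact hW ▸ (W.finite_toSet.isCompact_convexHull ℝ).isClosed
    exact frequently_slope_comp_lt_of_eqOn_dotProduct_add hXclosed (fun i y hy => hVX i y hy)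
      ((hderiv t ht).mono fun s hs => ht.trans hs.le)
      (eventually_mem_nhdsWithin.mono fun z hz => mem_iUnion.1 (hcover ▸ hxS z (ht.trans hz.le)))
      fun i hi => (hcell i _ hi).trans_lt hr

/-- Correctness of SEROAISE: `S` is a compact forward invariant set containing `0`,
partitioned into finitely many compact convex polytopes; `f` is continuous, piecewise affine,
locally Lipschitz on `S` with `f(0) = 0`; `V` is continuous and piecewise affine with zero
offset on cells containing the origin; and the derivative `p_i·(A_i v + a_i)` of `V` along the
dynamics is `≤ -ε₁ < 0` at every nonzero vertex of every cell. Then every solution starting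
in `S` converges to `0`, i.e. `S` is contained in the region of attraction of `0`. -/
theorem stmt11 {n : ℕ} {ι : Type*} [Fintype ι]
    (S : Set (Fin n → ℝ)) (hScomp : IsCompact S) (h0S : (0 : Fin n → ℝ) ∈ S)
    (X : ι → Set (Fin n → ℝ))
    (hXpoly : ∀ i, ∃ W : Finset (Fin n → ℝ), X i = convexHull ℝ (W : Set (Fin n → ℝ)))
    (hcover : (⋃ i, X i) = S)
    (hdisj : ∀ i j, i ≠ j → interior (X i) ∩ interior (X j) = ∅)
    (f : (Fin n → ℝ) → (Fin n → ℝ)) (hf : ContinuousOn f S)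
    (A : ι → Matrix (Fin n) (Fin n) ℝ) (a : ι → Fin n → ℝ)
    (hfX : ∀ i, ∀ x ∈ X i, f x = A i *ᵥ x + a i)
    (hf0 : f 0 = 0)
    (hlip : ∀ x ∈ S, ∃ (K : NNReal) (U : Set (Fin n → ℝ)),
      U ∈ nhdsWithin x S ∧ LipschitzOnWith K f U)
    (hSinv : FwdInv f S)
    (V : (Fin n → ℝ) → ℝ) (hV : ContinuousOn V S)
    (p : ι → Fin n → ℝ) (q : ι → ℝ)
    (hVX : ∀ i, ∀ x ∈ X i, V x = p i ⬝ᵥ x + q i)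
    (hq0 : ∀ i, (0 : Fin n → ℝ) ∈ X i → q i = 0)
    (ε₁ : ℝ) (hε₁ : 0 < ε₁)
    (hdec : ∀ i, ∀ v ∈ (X i).extremePoints ℝ, v ≠ 0 →
      p i ⬝ᵥ (A i *ᵥ v + a i) ≤ -ε₁) :
    ∀ x : ℝ → (Fin n → ℝ), IsSolOn f x (⊤ : EReal) → x 0 ∈ S →
      Tendsto x atTop (nhds 0) :=
  stmt11_general S hScomp X hXpoly hcover f hf A a hfX hf0 hSinv V hV p q hVX ε₁ hε₁ hdec
end
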